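/- Let X be a Banach space and T a bounded linear operator on X. If T/c is hypercyclic for some real number c ≥ 1, then T is convex-cyclic. -/

import Mathlib

/-!
Write `S = c⁻¹ T`, so that `Sⁿ x = c⁻ⁿ Tⁿ x` lies in `[0, 1] • orb(T, x)`. The closed convex hull
`K` of `orb(T, x)` contains `0`: if `a z ≈ -x` with `z` in the orbit, the convex combination
`(1 + a)⁻¹ (a z + x)` of `z` and `x` has norm at most `‖a z + x‖`. Hence `K` is star-shaped
about `0`, contains `[0, 1] • orb(T, x)` and therefore the dense `S`-orbit.
-/

open Set Pointwise

section ConvexHull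

variable {E : Type*} [SeminormedAddCommGroup E] [NormedSpace ℝ E] {s : Set E}

lemma inv_one_add_smul_add_mem_convexHull {x z : E} (hx : x ∈ s) (hz : z ∈ s) {a : ℝ}
    (ha : 0 ≤ a) : (1 + a)⁻¹ • (a • z + x) ∈ convexHull ℝ s := by
  have h1a : (0 : ℝ) < 1 + a := by linarith
  have hcombo : (a / (1 + a)) • z + (1 / (1 + a)) • x = (1 + a)⁻¹ • (a • z + x) := by
    rw [smul_add, smul_smul, div_eq_inv_mul, one_div, mul_comm]
  rw [← hcombo]
  exact convex_convexHull ℝ s (subset_convexHull ℝ s hz) (subset_convexHull ℝ s hx)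
    (by positivity) (by positivity) (by rw [← add_div, add_comm, div_self h1a.ne'])

lemma zero_mem_closure_convexHull_of_neg_mem_closure {x : E} (hx : x ∈ s)
    (h : -x ∈ closure (Icc (0 : ℝ) 1 • s)) : (0 : E) ∈ closure (convexHull ℝ s) := by
  rw [Metric.mem_closure_iff] at h ⊢
  intro ε hε
  obtain ⟨_, ⟨a, ⟨ha0, -⟩, z, hz, rfl⟩, hdist⟩ := h ε hε
  refine ⟨_, inv_one_add_smul_add_mem_convexHull hx hz ha0, ?_⟩
  have h1a : (0 : ℝ) < 1 + a := by linarith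
  calc dist 0 ((1 + a)⁻¹ • (a • z + x))
      = (1 + a)⁻¹ * ‖a • z + x‖ := by
        rw [dist_zero_left, norm_smul, Real.norm_of_nonneg (inv_nonneg.mpr h1a.le)]
    _ ≤ ‖a • z + x‖ := mul_le_of_le_one_left (norm_nonneg _) (inv_le_one_of_one_le₀ (by linarith))
    _ = dist (-x) (a • z) := by rw [dist_comm, dist_eq_norm, sub_neg_eq_add]
    _ < ε := hdist

lemma Icc_smul_subset_closure_convexHull (h0 : (0 : E) ∈ closure (convexHull ℝ s)) :
    Icc (0 : ℝ) 1 • s ⊆ closure (convexHull ℝ s) := by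
  rintro _ ⟨a, ha, z, hz, rfl⟩
  exact (convex_convexHull ℝ s).closure.smul_mem_of_zero_mem h0
    (subset_closure (subset_convexHull ℝ s hz)) ha

lemma dense_convexHull_of_dense_Icc_smul {x : E} (hx : x ∈ s) (hd : Dense (Icc (0 : ℝ) 1 • s)) :
    Dense (convexHull ℝ s) := by
  have h0 := zero_mem_closure_convexHull_of_neg_mem_closure hx (hd.closure_eq ▸ mem_univ (-x))
  exact dense_closure.mp (hd.mono (Icc_smul_subset_closure_convexHull h0))

end ConvexHull

lemma ContinuousLinearMap.ofReal_smul_pow_apply {𝕜 X : Type*} [RCLike 𝕜] [NormedAddCommGroup X]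
    [NormedSpace 𝕜 X] [NormedSpace ℝ X] [IsScalarTower ℝ 𝕜 X] (T : X →L[𝕜] X) (r : ℝ) (n : ℕ)
    (x : X) : (((r : 𝕜) • T) ^ n) x = r ^ n • (T ^ n) x := by
  rw [smul_pow, smul_apply, ← RCLike.ofReal_pow, RCLike.real_smul_eq_coe_smul (K := 𝕜)]

theorem convexCyclic_of_hypercyclic_div_general
    {𝕜 : Type*} [RCLike 𝕜] {X : Type*} [NormedAddCommGroup X] [NormedSpace 𝕜 X]
    [NormedSpace ℝ X] [IsScalarTower ℝ 𝕜 X] (T : X →L[𝕜] X) (c : ℝ) (hc : 1 ≤ c)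
    (h : ∃ x : X, Dense (Set.range fun n : ℕ => ((((1 / c : ℝ) : 𝕜) • T) ^ n) x)) :
    ∃ x : X, Dense (convexHull ℝ (Set.range fun n : ℕ => (T ^ n) x)) := by
  obtain ⟨x, hx⟩ := h
  have hc' : 1 / c ∈ Icc (0 : ℝ) 1 :=
    ⟨by positivity, (div_le_one (by linarith)).mpr hc⟩
  have hsub : (Set.range fun n : ℕ => ((((1 / c : ℝ) : 𝕜) • T) ^ n) x) ⊆
      Icc (0 : ℝ) 1 • Set.range fun n : ℕ => (T ^ n) x := by
    rintro _ ⟨n, rfl⟩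
    simp only [T.ofReal_smul_pow_apply]
    exact smul_mem_smul ⟨pow_nonneg hc'.1 n, pow_le_one₀ hc'.1 hc'.2⟩ ⟨n, rfl⟩
  exact ⟨x, dense_convexHull_of_dense_Icc_smul ⟨0, rfl⟩ (hx.mono hsub)⟩

/-- If `T/c` is hypercyclic on a Banach space `X` for some real `c ≥ 1`,
then `T` is convex-cyclic. -/
theorem convexCyclic_of_hypercyclic_div
    {𝕜 : Type*} [RCLike 𝕜] {X : Type*} [NormedAddCommGroup X] [NormedSpace 𝕜 X]
    [NormedSpace ℝ X] [IsScalarTower ℝ 𝕜 X] [CompleteSpace X] (T : X →L[𝕜] X) (c : ℝ) (hc : 1 ≤ c)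
    (h : ∃ x : X, Dense (Set.range fun n : ℕ => ((((1 / c : ℝ) : 𝕜) • T) ^ n) x)) :
    ∃ x : X, Dense (convexHull ℝ (Set.range fun n : ℕ => (T ^ n) x)) :=
  convexCyclic_of_hypercyclic_div_general T c hc h
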